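/- arXiv:math/0005137 — 2 statements merged into one kernel-verified Lean document; each statement's English description precedes it below -/
import Mathlib

section
/- For every real y with 0 < 2y ≤ 1, the integral E_0(y) = ∫_0^∞ exp(-y(v + 1/v)) dv/v satisfies E_0(y) ≥ 2∫_{2y}^1 e^{-v} dv/v. -/
/-!
The measure `dv / v` is invariant under `v ↦ v⁻¹`, which swaps `(0, 1)` and `(1, ∞)`, and the
integrand `exp (-y (v + 1/v))` is symmetric under it, so `E₀(y) = 2 ∫_1^∞ exp (-y (v + 1/v)) dv/v`.
For `v ≥ 1` we have `v + 1/v ≤ 2v`, so this is at least `2 ∫_1^{1/(2y)} exp (-2yv) dv/v`, which the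
scale invariance of `dv / v` turns into `2 ∫_{2y}^1 exp (-u) du/u`.
-/

open MeasureTheory Real Set

lemma image_inv_Ioi_one : Inv.inv '' Ioi (1 : ℝ) = Ioo 0 1 := by
  rw [image_inv_eq_inv, inv_Ioi₀ one_pos, inv_one]

lemma hasDerivWithinAt_inv_Ioi_one :
    ∀ x ∈ Ioi (1 : ℝ), HasDerivWithinAt Inv.inv (-(x ^ 2)⁻¹) (Ioi 1) x :=
  fun _ hx => (hasDerivAt_inv (zero_lt_one.trans hx).ne').hasDerivWithinAt

lemma abs_deriv_inv_smul_div_inv {x : ℝ} (hx : x ∈ Ioi (1 : ℝ)) (f : ℝ → ℝ) :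
    |-(x ^ 2)⁻¹| • (f x⁻¹ / x⁻¹) = f x⁻¹ / x := by
  have hx0 : x ≠ 0 := (zero_lt_one.trans hx).ne'
  rw [smul_eq_mul, abs_neg, abs_of_pos (by positivity)]
  field_simp

lemma integrableOn_Ioo_zero_one_div_iff (f : ℝ → ℝ) :
    IntegrableOn (fun v => f v / v) (Ioo 0 1) ↔ IntegrableOn (fun v => f v⁻¹ / v) (Ioi 1) := by
  rw [← image_inv_Ioi_one, integrableOn_image_iff_integrableOn_abs_deriv_smul measurableSet_Ioi
    hasDerivWithinAt_inv_Ioi_one inv_injective.injOn]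
  exact integrableOn_congr_fun (fun x hx => abs_deriv_inv_smul_div_inv hx f) measurableSet_Ioi

lemma integral_Ioo_zero_one_div_eq (f : ℝ → ℝ) :
    ∫ v in Ioo 0 1, f v / v = ∫ v in Ioi 1, f v⁻¹ / v := by
  rw [← image_inv_Ioi_one, integral_image_eq_integral_abs_deriv_smul measurableSet_Ioi
    hasDerivWithinAt_inv_Ioi_one inv_injective.injOn]
  exact setIntegral_congr_fun measurableSet_Ioi (fun x hx => abs_deriv_inv_smul_div_inv hx f)

lemma integral_Ioi_zero_div_eq_two_mul {f : ℝ → ℝ} (hf : ∀ v, f v⁻¹ = f v)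
    (hint : IntegrableOn (fun v => f v / v) (Ioi 1)) :
    ∫ v in Ioi 0, f v / v = 2 * ∫ v in Ioi 1, f v / v := by
  have hinv : (fun v => f v⁻¹ / v) = fun v => f v / v := funext fun v => by rw [hf]
  have hint₀ : IntegrableOn (fun v => f v / v) (Ioo 0 1) := by
    rwa [integrableOn_Ioo_zero_one_div_iff, hinv]
  rw [← Ioc_union_Ioi_eq_Ioi zero_le_one, setIntegral_union Ioc_disjoint_Ioi_same
    measurableSet_Ioi ((integrableOn_Ioc_iff_integrableOn_Ioo).2 hint₀) hint,
    integral_Ioc_eq_integral_Ioo, integral_Ioo_zero_one_div_eq, hinv, two_mul]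

lemma intervalIntegral.integral_comp_mul_left_div_self (g : ℝ → ℝ) {c : ℝ} (hc : c ≠ 0)
    (a b : ℝ) : ∫ x in a..b, g (c * x) / x = ∫ x in c * a..c * b, g x / x := by
  calc ∫ x in a..b, g (c * x) / x = ∫ x in a..b, c • (g (c * x) / (c * x)) :=
        integral_congr fun x _ => by
          rcases eq_or_ne x 0 with rfl | hx
          · simp
          · rw [smul_eq_mul]; field_simp
    _ = ∫ x in c * a..c * b, g x / x := by
        rw [integral_smul, integral_comp_mul_left (fun x => g x / x) hc, smul_inv_smul₀ hc]

lemma exp_neg_two_mul_le_exp_neg_mul_add_one_div {y v : ℝ} (hy : 0 ≤ y) (hv : 1 ≤ v) :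
    exp (-(2 * y * v)) ≤ exp (-(y * (v + 1 / v))) := by
  have : 1 / v ≤ v := (div_le_one₀ (by linarith)).2 hv |>.trans hv
  exact exp_le_exp.2 (by nlinarith)

lemma integrableOn_exp_neg_mul_add_one_div_div_Ioi_one {y : ℝ} (hy : 0 < y) :
    IntegrableOn (fun v => exp (-(y * (v + 1 / v))) / v) (Ioi 1) := by
  refine (exp_neg_integrableOn_Ioi 1 hy).mono' ?_ ?_
  · refine ContinuousOn.aestronglyMeasurable (fun v hv => ?_) measurableSet_Ioi
    have hv0 : v ≠ 0 := (zero_lt_one.trans hv).ne'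
    fun_prop (disch := exact hv0)
  · filter_upwards [ae_restrict_mem measurableSet_Ioi] with v (hv : 1 < v)
    have hv0 : 0 < v := zero_lt_one.trans hv
    rw [norm_of_nonneg (by positivity), div_le_iff₀ hv0]
    calc exp (-(y * (v + 1 / v))) ≤ exp (-y * v) := by
          gcongr
          nlinarith [one_div_pos.2 hv0]
      _ ≤ exp (-y * v) * v := le_mul_of_one_le_right (exp_nonneg _) hv.le

/-- For `0 < 2y ≤ 1`, the integral `E₀(y) = ∫_0^∞ exp(-y(v+1/v)) dv/v`
satisfies `E₀(y) ≥ 2 ∫_{2y}^1 e^{-v} dv/v`. -/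
theorem stmt_0 (y : ℝ) (hy : 0 < 2 * y) (hy1 : 2 * y ≤ 1) :
    2 * ∫ v in (2 * y)..1, Real.exp (-v) / v ≤
      ∫ v in Set.Ioi (0 : ℝ), Real.exp (-(y * (v + 1 / v))) / v := by
  have hy0 : 0 < y := by linarith
  have hint := integrableOn_exp_neg_mul_add_one_div_div_Ioi_one hy0
  have hc : 1 ≤ (2 * y)⁻¹ := (one_le_inv₀ hy).2 hy1
  rw [integral_Ioi_zero_div_eq_two_mul (f := fun v => exp (-(y * (v + 1 / v))))
    (fun v => by simp only [one_div, inv_inv, add_comm]) hint]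
  gcongr
  calc ∫ v in (2 * y)..1, exp (-v) / v
      = ∫ v in 1..(2 * y)⁻¹, exp (-(2 * y * v)) / v := by
        rw [intervalIntegral.integral_comp_mul_left_div_self (fun v => exp (-v)) hy.ne', mul_one,
          mul_inv_cancel₀ hy.ne']
    _ ≤ ∫ v in 1..(2 * y)⁻¹, exp (-(y * (v + 1 / v))) / v := by
        refine intervalIntegral.integral_mono_on hc ?_ ?_ fun v hv => ?_
        · refine ContinuousOn.intervalIntegrable fun v hv => ?_
          have hv0 : v ≠ 0 := (zero_lt_one.trans_le (uIcc_of_le hc ▸ hv).1).ne'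
          fun_prop (disch := exact hv0)
        · exact (intervalIntegrable_iff_integrableOn_Ioc_of_le hc).2
            (hint.mono_set Ioc_subset_Ioi_self)
        · exact div_le_div_of_nonneg_right (exp_neg_two_mul_le_exp_neg_mul_add_one_div hy0.le hv.1)
            (zero_le_one.trans hv.1)
    _ ≤ ∫ v in Ioi 1, exp (-(y * (v + 1 / v))) / v := by
        rw [intervalIntegral.integral_of_le hc]
        refine setIntegral_mono_set hint ?_ Ioc_subset_Ioi_self.eventuallyLE
        filter_upwards [ae_restrict_mem measurableSet_Ioi] with v (hv : 1 < v)
        have := zero_lt_one.trans hv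
        positivity
end

section
/- Fix k > 0, N ≥ 1 an integer, and M an integer. Then the function p ↦ exp(k p^{-N}) ∫_0^p y^{-M} exp(-k y^{-N}) dy has moderate growth as p → 0⁺: there exist constants C > 0 and m ∈ ℕ such that the expression is at most C p^{-m} for all small p > 0. -/
open MeasureTheory Real

/-- For `k > 0`, `N ≥ 1`, `M ∈ ℤ`, the function
`p ↦ exp(k p^{-N}) ∫_0^p y^{-M} exp(-k y^{-N}) dy` has moderate growth as `p → 0⁺`. -/
theorem stmt_10 (k : ℝ) (hk : 0 < k) (N : ℕ) (hN : 1 ≤ N) (M : ℤ) :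
    ∃ C > (0 : ℝ), ∃ m : ℕ, ∃ p₁ > (0 : ℝ), ∀ p : ℝ, 0 < p → p ≤ p₁ →
      Real.exp (k * p ^ (-(N : ℤ))) *
          (∫ y in (0 : ℝ)..p, y ^ (-M) * Real.exp (-(k * y ^ (-(N : ℤ))))) ≤
        C * p ^ (-(m : ℤ)) := by
  set m : ℕ := M.toNat with hm
  have hN' : (0:ℝ) < N := by exact_mod_cast Nat.lt_of_lt_of_le Nat.zero_lt_one hN
  refine ⟨1, one_pos, m, min 1 (k * N / (m + 1)), lt_min one_pos (by positivity), ?_⟩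
  intro p hp hp₁
  have hp1 : p ≤ 1 := hp₁.trans (min_le_left _ _)
  have hpN : 0 < p ^ N := pow_pos hp N
  have hNne : N ≠ 0 := by omega
  -- the key size condition on p
  have hcond : (m : ℝ) * p ^ N ≤ k * N := by
    have h1 : p ^ N ≤ p := pow_le_of_le_one hp.le hp1 hNne
    have h2 : p ≤ k * N / (m + 1) := hp₁.trans (min_le_right _ _)
    have h3 : (m : ℝ) * p ≤ (m : ℝ) * (k * N / (m + 1)) :=
      mul_le_mul_of_nonneg_left h2 (by positivity)
    have h4 : (m : ℝ) * (k * N / (m + 1)) ≤ k * N := by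
      rw [mul_div_assoc']
      rw [div_le_iff₀ (by positivity)]
      nlinarith [hk.le, hN'.le]
    nlinarith [mul_le_mul_of_nonneg_left h1 (Nat.cast_nonneg m : (0:ℝ) ≤ m)]
  set B := p ^ (-(m:ℤ)) * Real.exp (-(k * p ^ (-(N:ℤ)))) with hB
  -- key pointwise bound on the integrand
  have key : ∀ y ∈ Set.Ioc (0:ℝ) p,
      ‖y ^ (-M) * Real.exp (-(k * y ^ (-(N : ℤ))))‖ ≤ B := by
    rintro y ⟨hy0, hyp⟩
    have hy1 : y ≤ 1 := hyp.trans hp1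
    have hyM : (0:ℝ) < y ^ (-M) := zpow_pos hy0 _
    rw [norm_mul, Real.norm_eq_abs, Real.norm_eq_abs, abs_of_pos hyM,
      abs_of_pos (Real.exp_pos _)]
    have step1 : y ^ (-M) ≤ y ^ (-(m:ℤ)) := by
      apply zpow_le_zpow_right_of_le_one₀ hy0 hy1
      simp only [neg_le_neg_iff, hm]
      exact Int.self_le_toNat M
    have step2 : y ^ (-(m:ℤ)) * Real.exp (-(k * y ^ (-(N : ℤ)))) ≤ B := by
      rw [hB]
      rw [zpow_neg, zpow_neg, zpow_neg, zpow_neg, zpow_natCast, zpow_natCast,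
        zpow_natCast, zpow_natCast]
      set s : ℝ := (p ^ N)⁻¹ with hs
      set t : ℝ := (y ^ N)⁻¹ with ht
      have hs0 : 0 < s := by positivity
      have ht0 : 0 < t := by positivity
      set r : ℝ := p / y with hr
      have hr1 : 1 ≤ r := (one_le_div hy0).mpr hyp
      have hrN : s * r ^ N = t := by
        rw [hs, ht, hr, div_pow]
        field_simp
      have hms : (m : ℝ) ≤ k * N * s := by
        rw [hs, le_mul_inv_iff₀ hpN]
        linarith [hcond]
      have hmain : r ^ m ≤ Real.exp (k * t - k * s) := by
        apply le_of_pow_le_pow_left₀ hNne (Real.exp_pos _).le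
        have e1 : (r ^ m) ^ N = (r ^ N) ^ m := by ring
        have e2 : r ^ N ≤ Real.exp (r ^ N - 1) := by
          have := Real.add_one_le_exp (r ^ N - 1)
          linarith
        have e3 : (r ^ N) ^ m ≤ Real.exp (r ^ N - 1) ^ m :=
          pow_le_pow_left₀ (by positivity) e2 m
        have e4 : Real.exp (r ^ N - 1) ^ m = Real.exp (m * (r ^ N - 1)) := by
          rw [← Real.exp_nat_mul]
        have e5 : (m:ℝ) * (r ^ N - 1) ≤ k * N * s * (r ^ N - 1) := by
          apply mul_le_mul_of_nonneg_right hms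
          nlinarith [one_le_pow₀ hr1 (n := N)]
        have e6 : k * N * s * (r ^ N - 1) = (N:ℝ) * (k * t - k * s) := by
          rw [← hrN]; ring
        calc (r ^ m) ^ N = (r ^ N) ^ m := e1
          _ ≤ Real.exp (r ^ N - 1) ^ m := e3
          _ = Real.exp (m * (r ^ N - 1)) := e4
          _ ≤ Real.exp ((N:ℝ) * (k * t - k * s)) := by
              apply Real.exp_le_exp.mpr; linarith [e5, e6.le]
          _ = Real.exp (k * t - k * s) ^ N := by
              rw [← Real.exp_nat_mul]
      have hyinv : (y ^ m)⁻¹ = (p ^ m)⁻¹ * r ^ m := by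
        rw [hr, div_pow]
        field_simp
      rw [hyinv]
      have : (p ^ m)⁻¹ * r ^ m * Real.exp (-(k * t)) ≤
          (p ^ m)⁻¹ * (Real.exp (k * t - k * s) * Real.exp (-(k * t))) := by
        rw [mul_assoc]
        apply mul_le_mul_of_nonneg_left _ (by positivity)
        exact mul_le_mul_of_nonneg_right hmain (Real.exp_pos _).le
      refine this.trans (le_of_eq ?_)
      rw [← Real.exp_add]
      ring_nf
    calc y ^ (-M) * Real.exp (-(k * y ^ (-(N : ℤ))))
        ≤ y ^ (-(m:ℤ)) * Real.exp (-(k * y ^ (-(N : ℤ)))) :=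
          mul_le_mul_of_nonneg_right step1 (Real.exp_pos _).le
      _ ≤ B := step2
  -- bound the integral
  have hnorm : ‖∫ y in (0:ℝ)..p, y ^ (-M) * Real.exp (-(k * y ^ (-(N : ℤ))))‖ ≤
      B * |p - 0| := by
    apply intervalIntegral.norm_integral_le_of_norm_le_const
    intro y hy
    rw [Set.uIoc_of_le hp.le] at hy
    exact key y hy
  have hint : (∫ y in (0:ℝ)..p, y ^ (-M) * Real.exp (-(k * y ^ (-(N : ℤ))))) ≤ B * p := by
    refine (le_abs_self _).trans ?_
    rw [← Real.norm_eq_abs]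
    simpa [abs_of_pos hp] using hnorm
  have hfinal : Real.exp (k * p ^ (-(N : ℤ))) *
      (∫ y in (0 : ℝ)..p, y ^ (-M) * Real.exp (-(k * y ^ (-(N : ℤ))))) ≤
      Real.exp (k * p ^ (-(N : ℤ))) * (B * p) :=
    mul_le_mul_of_nonneg_left hint (Real.exp_pos _).le
  refine hfinal.trans ?_
  rw [hB, one_mul]
  have : Real.exp (k * p ^ (-(N : ℤ))) *
      (p ^ (-(m:ℤ)) * Real.exp (-(k * p ^ (-(N:ℤ)))) * p) = p ^ (-(m:ℤ)) * p := by
    rw [Real.exp_neg]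
    field_simp
  rw [this]
  nlinarith [zpow_pos hp (-(m:ℤ)), hp1, hp]
end
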